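/- arXiv:2507.04122 — 2 statements merged into one kernel-verified Lean document; each statement's English description precedes it below -/
import Mathlib

section
/- With notation as above, the map w ↦ wT gives a bijection between the set of minimal length double coset representatives of S_λ \ S_n / S_ν and the set of row semi-standard λ-tableaux of type ν (fillings of the λ-diagram with weakly increasing rows containing value i exactly m_i times). -/
def adjSet (n : ℕ) : Set (Equiv.Perm (Fin n)) :=
  {σ | ∃ (i : ℕ) (h : i + 1 < n), σ = Equiv.swap ⟨i, Nat.lt_of_succ_lt h⟩ ⟨i + 1, h⟩}

noncomputable def coxLen {n : ℕ} (w : Equiv.Perm (Fin n)) : ℕ :=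
  sInf {k | ∃ l : List (Equiv.Perm (Fin n)),
    l.length = k ∧ (∀ x ∈ l, x ∈ adjSet n) ∧ l.prod = w}

/-- The index of the block of the composition `c` containing position `k`
(positions and blocks are 0-indexed): the number of blocks ending at or before `k`. -/
def blockIdx (c : List ℕ) (k : ℕ) : ℕ :=
  ((Finset.range c.length).filter (fun i => (c.take (i + 1)).sum ≤ k)).card

/-- The Young subgroup of `S_n` attached to a composition `c` of `n`:
permutations preserving each consecutive block of sizes given by `c`. -/
def young (n : ℕ) (c : List ℕ) : Set (Equiv.Perm (Fin n)) :=
  {w | ∀ k : Fin n, blockIdx c ((w k : Fin n) : ℕ) = blockIdx c (k : ℕ)}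

/-- The double coset `S_c · g · S_d` in `S_n`. -/
def dCoset (n : ℕ) (c d : List ℕ) (g : Equiv.Perm (Fin n)) : Set (Equiv.Perm (Fin n)) :=
  {w | ∃ a ∈ young n c, ∃ b ∈ young n d, w = a * g * b}


def rowIncr (n : ℕ) (lam : List ℕ) (f : Fin n → ℕ) : Prop :=
  ∀ (k : ℕ) (h : k + 1 < n), blockIdx lam k = blockIdx lam (k + 1) →
    f ⟨k, Nat.lt_of_succ_lt h⟩ ≤ f ⟨k + 1, h⟩

/-!
The Coxeter length of a permutation is its number of inversions. A permutation `w` has minimal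
length in `S_λ w S_ν` iff `w` is increasing on every `ν`-block and `w⁻¹` on every `λ`-block: a
descent inside a block is removed by a simple transposition of the Young subgroup, and
conversely, for such `w` every inversion is a cross inversion (its two positions lie in different
`ν`-blocks and are sent to different `λ`-blocks), while the number of cross inversions is constant
on the double coset and bounds the length of each of its elements from below.

The tableau `wT` is `k ↦ (ν-block of w⁻¹ k)`. If `w` is increasing on `ν`-blocks, it is the
stable sorting permutation of `wT`, whence injectivity. Conversely, the stable sort `σ` of a
tableau `f` of type `ν` satisfies `f ∘ σ = T`, as a monotone tuple is determined by its content,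
and stability turns the weakly increasing rows of `f` into `σ⁻¹` increasing on `λ`-blocks.
-/

open Finset Equiv

section

variable {n : ℕ}

section BlockIdx

variable (c : List ℕ) {j k l : ℕ}

lemma blockIdx_mono : Monotone (blockIdx c) := fun _ _ hkl =>
  card_le_card fun _ hi => by
    simp only [mem_filter] at hi ⊢
    exact ⟨hi.1, hi.2.trans hkl⟩

lemma lt_of_blockIdx_lt (h : blockIdx c k < blockIdx c l) : k < l :=
  lt_of_not_ge fun hle => (blockIdx_mono c hle).not_gt h

lemma le_blockIdx (hj : j ≤ c.length) (h : (c.take j).sum ≤ k) : j ≤ blockIdx c k :=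
  calc j = #(range j) := (card_range j).symm
  _ ≤ blockIdx c k := card_le_card fun i hi => by
      rw [mem_range] at hi
      exact mem_filter.2 ⟨mem_range.2 (by omega), (c.monotone_sum_take (by omega)).trans h⟩

lemma blockIdx_le (h : k < (c.take (j + 1)).sum) : blockIdx c k ≤ j :=
  calc blockIdx c k ≤ #(range j) := card_le_card fun i hi => by
        rw [mem_filter] at hi
        exact mem_range.2 (lt_of_not_ge fun hji =>
          ((c.monotone_sum_take (by omega : j + 1 ≤ i + 1)).trans hi.2).not_gt h)
  _ = j := card_range j

lemma blockIdx_eq_iff (hj : j < c.length) :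
    blockIdx c k = j ↔ (c.take j).sum ≤ k ∧ k < (c.take (j + 1)).sum := by
  refine ⟨fun h => ⟨?_, ?_⟩,
    fun ⟨h1, h2⟩ => le_antisymm (blockIdx_le c h2) (le_blockIdx c hj.le h1)⟩
  · by_contra! hk
    obtain ⟨j, rfl⟩ : ∃ j', j = j' + 1 :=
      Nat.exists_eq_succ_of_ne_zero (by rintro rfl; simp at hk)
    have := blockIdx_le c hk
    omega
  · by_contra! hk
    have := le_blockIdx c hj hk
    omega

lemma card_blockIdx_fiber (hc : c.sum = n) (hj : j < c.length) :
    #{k : Fin n | blockIdx c k = j} = c.getD j 0 := by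
  have hn : (c.take (j + 1)).sum ≤ n := by
    simpa [hc] using c.monotone_sum_take (show j + 1 ≤ c.length by omega)
  have himg : ({k : Fin n | blockIdx c k = j} : Finset (Fin n)).map Fin.valEmbedding =
      Ico (c.take j).sum (c.take (j + 1)).sum := by
    ext m
    simp only [mem_map, mem_filter, mem_univ, true_and, Fin.valEmbedding_apply, mem_Ico,
      blockIdx_eq_iff c hj]
    exact ⟨fun ⟨k, hk, hkm⟩ => hkm ▸ hk, fun hm => ⟨⟨m, by omega⟩, hm, rfl⟩⟩
  rw [← card_map Fin.valEmbedding, himg, Nat.card_Ico, List.sum_take_succ c j hj,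
    List.getD_eq_getElem c 0 hj]
  omega

lemma sum_range_length_getD : ∑ j ∈ range c.length, c.getD j 0 = c.sum := by
  rw [sum_range]
  simp only [Fin.is_lt, List.getD_eq_getElem]
  exact Fin.sum_univ_getElem c

end BlockIdx

lemma card_fiber_eq_getD {c : List ℕ} {g : Fin n → ℕ} (hc : c.sum = n)
    (hg : ∀ j < c.length, #{k | g k = j} = c.getD j 0) (j : ℕ) :
    #{k | g k = j} = c.getD j 0 := by
  rcases lt_or_ge j c.length with hj | hj
  · exact hg j hj
  have hcard : #{k | g k ∈ range c.length} = #(univ : Finset (Fin n)) :=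
    calc #{k | g k ∈ range c.length} = ∑ j ∈ range c.length, #{k | g k = j} :=
          (sum_card_fiberwise_eq_card_filter _ _ _).symm
    _ = ∑ j ∈ range c.length, c.getD j 0 := sum_congr rfl fun j hj => hg j (mem_range.1 hj)
    _ = #(univ : Finset (Fin n)) := by rw [sum_range_length_getD, hc, card_univ, Fintype.card_fin]
  rw [List.getD_eq_default _ _ hj, card_eq_zero, filter_eq_empty_iff]
  exact fun k _ hk => (mem_range.1 (card_filter_eq_iff.1 hcard k (mem_univ k))).not_ge (hk ▸ hj)

lemma card_fiber_comp_perm {ι α : Type*} [Fintype ι] [DecidableEq α] (g : ι → α) (σ : Perm ι)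
    (a : α) : #{i | g (σ i) = a} = #{i | g i = a} :=
  card_equiv σ fun i => by simp

lemma eq_of_monotone_of_card_fiber_eq {α : Type*} [PartialOrder α] [DecidableEq α]
    {g h : Fin n → α} (hg : Monotone g) (hh : Monotone h)
    (hc : ∀ a, #{k | g k = a} = #{k | h k = a}) : g = h := by
  let e : ∀ a, {k // g k = a} ≃ {k // h k = a} := fun a =>
    Fintype.equivOfCardEq (by simp only [Fintype.card_subtype, hc])
  have hσ : h ∘ ofFiberEquiv e = g := funext (ofFiberEquiv_map e)
  calc g = h ∘ ofFiberEquiv e := hσ.symm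
  _ = h ∘ (1 : Perm (Fin n)) := Tuple.unique_monotone (by rwa [hσ]) hh
  _ = h := rfl

def BlockIncreasing {α : Type*} [Preorder α] (c : List ℕ) (f : Fin n → α) : Prop :=
  ∀ (i : ℕ) (h : i + 1 < n), blockIdx c i = blockIdx c (i + 1) →
    f ⟨i, Nat.lt_of_succ_lt h⟩ < f ⟨i + 1, h⟩

lemma BlockIncreasing.lt {α : Type*} [Preorder α] {c : List ℕ} {f : Fin n → α}
    (hf : BlockIncreasing c f) {p q : Fin n} (hpq : p < q) (hb : blockIdx c p = blockIdx c q) :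
    f p < f q := by
  obtain ⟨p, hp⟩ := p
  obtain ⟨q, hq⟩ := q
  simp only [Fin.mk_lt_mk] at hpq hb
  induction q, hpq using Nat.le_induction with
  | base => exact hf p hq hb
  | succ q hpq ih =>
    have hbq : blockIdx c p = blockIdx c q :=
      le_antisymm (blockIdx_mono c (by omega)) (hb ▸ blockIdx_mono c q.le_succ)
    exact (ih (by omega) hbq).trans (hf q hq (hbq ▸ hb))

lemma Tuple.inv_sort_lt_inv_sort {α : Type*} [LinearOrder α] {f : Fin n → α} {a b : Fin n}
    (hab : a < b) (hf : f a ≤ f b) : (Tuple.sort f)⁻¹ a < (Tuple.sort f)⁻¹ b := by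
  have hstable := (Tuple.eq_sort_iff.1 (rfl : Tuple.sort f = _)).2
  by_contra! hle
  have hlt : (Tuple.sort f)⁻¹ b < (Tuple.sort f)⁻¹ a :=
    hle.lt_of_ne fun h => hab.ne' ((Tuple.sort f)⁻¹.injective h)
  have hfba : f b ≤ f a := by simpa using Tuple.monotone_sort f hle
  exact lt_asymm hab (by simpa using hstable _ _ hlt (by simpa using le_antisymm hfba hf))

lemma BlockIncreasing.eq_sort {c : List ℕ} {w : Perm (Fin n)} (hw : BlockIncreasing c w) :
    w = Tuple.sort fun k => blockIdx c (w⁻¹ k) :=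
  Tuple.eq_sort_iff.2 ⟨fun _ _ hpq => by simpa using blockIdx_mono c hpq,
    fun _ _ hpq hb => hw.lt hpq (by simpa using hb)⟩

lemma apply_sort_eq_blockIdx {c : List ℕ} {f : Fin n → ℕ} (hc : c.sum = n)
    (hf : ∀ j < c.length, #{k | f k = j} = c.getD j 0) (k : Fin n) :
    f (Tuple.sort f k) = blockIdx c k := by
  have hT := card_fiber_eq_getD hc fun _ hj => card_blockIdx_fiber c hc hj
  refine congrFun (eq_of_monotone_of_card_fiber_eq (g := f ∘ Tuple.sort f)
    (Tuple.monotone_sort f) (fun _ _ h => blockIdx_mono c h) fun j => ?_) k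
  rw [hT]
  exact (card_fiber_comp_perm f _ j).trans (card_fiber_eq_getD hc hf j)

lemma eq_one_of_forall_lt_succ {w : Perm (Fin n)}
    (hw : ∀ (i : ℕ) (h : i + 1 < n), w ⟨i, Nat.lt_of_succ_lt h⟩ < w ⟨i + 1, h⟩) : w = 1 := by
  -- the empty composition puts every position into block `0`
  have hmono : StrictMono w := fun _ _ hpq =>
    BlockIncreasing.lt (c := []) (fun i h _ => hw i h) hpq (by simp [blockIdx])
  rw [← inv_eq_one, ← Tuple.sort_perm]
  exact Tuple.sort_eq_refl_iff_monotone.2 hmono.monotone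

def inversions (w : Perm (Fin n)) : Finset (Fin n × Fin n) :=
  {p | p.1 < p.2 ∧ w p.2 < w p.1}

@[simp]
lemma mem_inversions {w : Perm (Fin n)} {p : Fin n × Fin n} :
    p ∈ inversions w ↔ p.1 < p.2 ∧ w p.2 < w p.1 := by
  simp [inversions]

def invCount (w : Perm (Fin n)) : ℕ := #(inversions w)

lemma invCount_one : invCount (1 : Perm (Fin n)) = 0 := by
  refine card_eq_zero.2 (eq_empty_of_forall_notMem fun p hp => ?_)
  rw [mem_inversions] at hp
  exact lt_asymm hp.1 hp.2

lemma invCount_inv (w : Perm (Fin n)) : invCount w⁻¹ = invCount w :=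
  card_equiv ((prodComm _ _).trans (prodCongr w⁻¹ w⁻¹)) fun p => by
    simp [and_comm]

section AdjacentSwap

variable {a b : Fin n} (hab : (b : ℕ) = a + 1) (w : Perm (Fin n))
include hab

lemma card_inversions_mul_swap_erase :
    #((inversions (w * swap a b)).erase (a, b)) = #((inversions w).erase (a, b)) := by
  refine card_equiv (prodCongr (swap a b) (swap a b)) fun p => ?_
  simp only [mem_erase, mem_inversions, Perm.mul_apply, prodCongr_apply, Prod.map, ne_eq,
    Prod.ext_iff]
  have key : (¬(p.1 = a ∧ p.2 = b) ∧ p.1 < p.2) ↔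
      (¬(swap a b p.1 = a ∧ swap a b p.2 = b) ∧ swap a b p.1 < swap a b p.2) := by
    simp only [swap_apply_def, Fin.ext_iff, Fin.lt_def]
    split_ifs <;> omega
  tauto

lemma invCount_mul_swap_of_lt (h : w a < w b) : invCount (w * swap a b) = invCount w + 1 := by
  have hmem : (a, b) ∈ inversions (w * swap a b) := by
    simp only [mem_inversions, Perm.mul_apply, swap_apply_left, swap_apply_right]
    exact ⟨Fin.lt_def.2 (by omega), h⟩
  have hnmem : (a, b) ∉ inversions w := by simp [h.le]
  have := card_inversions_mul_swap_erase hab w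
  rw [card_erase_of_mem hmem, erase_eq_of_notMem hnmem] at this
  have := card_pos.2 ⟨_, hmem⟩
  unfold invCount
  omega

lemma invCount_mul_swap_of_gt (h : w b < w a) : invCount (w * swap a b) + 1 = invCount w := by
  have := invCount_mul_swap_of_lt hab (w * swap a b) (by simpa using h)
  rwa [mul_assoc, swap_mul_self, mul_one, eq_comm] at this

lemma invCount_mul_swap_le : invCount (w * swap a b) ≤ invCount w + 1 := by
  have hne : a ≠ b := by rw [ne_eq, Fin.ext_iff]; omega
  rcases (w.injective.ne hne).lt_or_gt with h | h
  · exact (invCount_mul_swap_of_lt hab w h).le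
  · have := invCount_mul_swap_of_gt hab w h
    omega

lemma invCount_swap_mul_le : invCount (swap a b * w) ≤ invCount w + 1 := by
  rw [← invCount_inv, mul_inv_rev, swap_inv, ← invCount_inv w]
  exact invCount_mul_swap_le hab w⁻¹

end AdjacentSwap

lemma exists_adjSet_word (w : Perm (Fin n)) :
    ∃ l : List (Perm (Fin n)), l.length = invCount w ∧ (∀ x ∈ l, x ∈ adjSet n) ∧ l.prod = w := by
  induction hm : invCount w using Nat.strong_induction_on generalizing w with
  | _ m ih =>
  by_cases hasc : ∀ (i : ℕ) (h : i + 1 < n), w ⟨i, Nat.lt_of_succ_lt h⟩ < w ⟨i + 1, h⟩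
  · obtain rfl := eq_one_of_forall_lt_succ hasc
    exact ⟨[], by simp [← hm, invCount_one], by simp, rfl⟩
  simp only [not_forall, not_lt] at hasc
  obtain ⟨i, h, hle⟩ := hasc
  set s : Perm (Fin n) := swap ⟨i, Nat.lt_of_succ_lt h⟩ ⟨i + 1, h⟩
  have hdesc : w ⟨i + 1, h⟩ < w ⟨i, Nat.lt_of_succ_lt h⟩ :=
    hle.lt_of_ne (w.injective.ne (by simp [Fin.ext_iff]))
  have hrel : invCount (w * s) + 1 = invCount w := invCount_mul_swap_of_gt rfl w hdesc
  obtain ⟨l, hlen, hadj, hprod⟩ := ih _ (by omega) (w * s) rfl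
  refine ⟨l ++ [s], by simp [hlen]; omega, ?_, by simp [s, hprod, mul_assoc]⟩
  simp only [List.mem_append, List.mem_singleton]
  rintro x (hx | rfl)
  exacts [hadj x hx, ⟨i, h, rfl⟩]

lemma invCount_prod_le_length {l : List (Perm (Fin n))} (hl : ∀ x ∈ l, x ∈ adjSet n) :
    invCount l.prod ≤ l.length := by
  induction l with
  | nil => simp [invCount_one]
  | cons x l ih =>
    obtain ⟨i, h, rfl⟩ := hl x List.mem_cons_self
    have := invCount_swap_mul_le (a := ⟨i, Nat.lt_of_succ_lt h⟩) (b := ⟨i + 1, h⟩) rfl l.prod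
    have := ih fun y hy => hl y (List.mem_cons_of_mem _ hy)
    rw [List.prod_cons, List.length_cons]
    omega

lemma coxLen_eq_invCount (w : Perm (Fin n)) : coxLen w = invCount w := by
  obtain ⟨l, hlen, hadj, hprod⟩ := exists_adjSet_word w
  refine le_antisymm (Nat.sInf_le ⟨l, hlen, hadj, hprod⟩) ?_
  refine le_csInf ⟨_, l, hlen, hadj, hprod⟩ fun k ⟨l', hlen', hadj', hprod'⟩ => ?_
  exact hlen' ▸ hprod' ▸ invCount_prod_le_length hadj'

section DoubleCoset

variable {lam nu : List ℕ} {w : Perm (Fin n)}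

def crossInversions (lam nu : List ℕ) (w : Perm (Fin n)) : Finset (Fin n × Fin n) :=
  {p | blockIdx nu p.1 < blockIdx nu p.2 ∧ blockIdx lam (w p.2) < blockIdx lam (w p.1)}

@[simp]
lemma mem_crossInversions {p : Fin n × Fin n} :
    p ∈ crossInversions lam nu w ↔
      blockIdx nu p.1 < blockIdx nu p.2 ∧ blockIdx lam (w p.2) < blockIdx lam (w p.1) := by
  simp [crossInversions]

lemma crossInversions_subset_inversions : crossInversions lam nu w ⊆ inversions w :=
  fun _ hp => by
    rw [mem_crossInversions] at hp
    exact mem_inversions.2 ⟨lt_of_blockIdx_lt nu hp.1, lt_of_blockIdx_lt lam hp.2⟩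

lemma card_crossInversions_mul_mul {a b : Perm (Fin n)} (ha : a ∈ young n lam)
    (hb : b ∈ young n nu) :
    #(crossInversions lam nu (a * w * b)) = #(crossInversions lam nu w) :=
  card_equiv (prodCongr b b) fun p => by
    simp only [mem_crossInversions, Perm.mul_apply, prodCongr_apply, Prod.map, ha (w (b _)),
      hb p.1, hb p.2]

lemma inversions_eq_crossInversions (hnu : BlockIncreasing nu w)
    (hlam : BlockIncreasing lam ⇑w⁻¹) : inversions w = crossInversions lam nu w := by
  refine subset_antisymm (fun p hp => ?_) crossInversions_subset_inversions
  obtain ⟨hlt, hw⟩ := mem_inversions.1 hp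
  refine mem_crossInversions.2 ⟨(blockIdx_mono nu hlt.le).lt_of_ne fun hb => ?_,
    (blockIdx_mono lam hw.le).lt_of_ne fun hb => ?_⟩
  · exact (hnu.lt hlt hb).not_gt hw
  · have := hlam.lt hw hb
    simp only [Perm.coe_inv, symm_apply_apply] at this
    exact this.not_gt hlt

lemma one_mem_young (c : List ℕ) : (1 : Perm (Fin n)) ∈ young n c := fun _ => rfl

lemma swap_mem_young {c : List ℕ} {a b : Fin n} (hb : blockIdx c a = blockIdx c b) :
    swap a b ∈ young n c := fun k => by
  rw [swap_apply_def]
  split_ifs <;> simp_all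

lemma blockIncreasing_of_invCount_le (c : List ℕ)
    (hw : ∀ (i : ℕ) (h : i + 1 < n), blockIdx c i = blockIdx c (i + 1) →
      invCount w ≤ invCount (w * swap ⟨i, Nat.lt_of_succ_lt h⟩ ⟨i + 1, h⟩)) :
    BlockIncreasing c w := fun i h hb => by
  by_contra! hle
  have hlt := hle.lt_of_ne (w.injective.ne (by simp [Fin.ext_iff]))
  have := invCount_mul_swap_of_gt rfl w hlt
  have := hw i h hb
  omega

lemma forall_dCoset_coxLen_le_iff :
    (∀ w' ∈ dCoset n lam nu w, coxLen w ≤ coxLen w') ↔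
      BlockIncreasing nu w ∧ BlockIncreasing lam ⇑w⁻¹ := by
  simp only [coxLen_eq_invCount]
  refine ⟨fun hmin => ⟨?_, ?_⟩, fun ⟨hnu, hlam⟩ w' hw' => ?_⟩
  · exact blockIncreasing_of_invCount_le nu fun i h hb =>
      hmin _ ⟨1, one_mem_young lam, _, swap_mem_young hb, by rw [one_mul]⟩
  · refine blockIncreasing_of_invCount_le lam fun i h hb => ?_
    have := hmin _ ⟨_, swap_mem_young (a := ⟨i, Nat.lt_of_succ_lt h⟩) (b := ⟨i + 1, h⟩) hb,
      1, one_mem_young nu, rfl⟩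
    rwa [mul_one, ← invCount_inv (_ * w), mul_inv_rev, swap_inv, ← invCount_inv w] at this
  · obtain ⟨a, ha, b, hb, rfl⟩ := hw'
    calc invCount w = #(crossInversions lam nu w) := by
          rw [invCount, inversions_eq_crossInversions hnu hlam]
    _ = #(crossInversions lam nu (a * w * b)) := (card_crossInversions_mul_mul ha hb).symm
    _ ≤ invCount (a * w * b) := card_le_card crossInversions_subset_inversions

end DoubleCoset

end

theorem bijOn_min_reps_row_semistandard_general
    (n : ℕ) (lam nu : List ℕ)
    (hnu : nu.sum = n) :
    Set.BijOn
      (fun w : Equiv.Perm (Fin n) => fun k : Fin n => blockIdx nu ((w⁻¹ k : Fin n) : ℕ))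
      {w | ∀ w' ∈ dCoset n lam nu w, coxLen w ≤ coxLen w'}
      {f : Fin n → ℕ | rowIncr n lam f ∧
        ∀ j < nu.length,
          (Finset.univ.filter (fun k : Fin n => f k = j)).card = nu.getD j 0} := by
  refine ⟨fun w hw => ?_, fun w hw w' hw' he => ?_, fun f ⟨hrow, hcount⟩ => ?_⟩
  · obtain ⟨-, hlam⟩ := forall_dCoset_coxLen_le_iff.1 hw
    exact ⟨fun i h hb => blockIdx_mono nu (hlam i h hb).le,
      fun j hj => (card_fiber_comp_perm _ w⁻¹ j).trans (card_blockIdx_fiber nu hnu hj)⟩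
  · calc w = Tuple.sort fun k => blockIdx nu (w⁻¹ k) :=
          (forall_dCoset_coxLen_le_iff.1 hw).1.eq_sort
    _ = Tuple.sort fun k => blockIdx nu (w'⁻¹ k) := congrArg Tuple.sort he
    _ = w' := (forall_dCoset_coxLen_le_iff.1 hw').1.eq_sort.symm
  have hfσ := apply_sort_eq_blockIdx hnu hcount
  refine ⟨Tuple.sort f, forall_dCoset_coxLen_le_iff.2 ⟨fun i h hb => ?_, fun i h hb => ?_⟩,
    funext fun k => by simpa using (hfσ ((Tuple.sort f)⁻¹ k)).symm⟩
  · exact (Tuple.eq_sort_iff.1 rfl).2 _ _ (Fin.mk_lt_mk.2 i.lt_succ_self)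
      (by rw [hfσ, hfσ]; exact hb)
  · exact Tuple.inv_sort_lt_inv_sort (Fin.mk_lt_mk.2 i.lt_succ_self) (hrow i h hb)

/-- The map `w ↦ wT` (with `T` the type-`ν` standard filling of the `λ`-diagram,
`wT(k) = T(w⁻¹ k) = ν`-block index of `w⁻¹ k`) is a bijection from the set of minimal
length representatives of the double cosets `S_λ \ S_n / S_ν` onto the set of row
semi-standard `λ`-tableaux of type `ν` (fillings of the `λ`-diagram with weakly
increasing rows, containing the value `i` exactly `m_i` times). -/
theorem bijOn_min_reps_row_semistandard
    (n : ℕ) (lam nu : List ℕ)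
    (hlam : lam.sum = n) (hnu : nu.sum = n)
    (hlampos : ∀ x ∈ lam, 0 < x) (hnupos : ∀ x ∈ nu, 0 < x) :
    Set.BijOn
      (fun w : Equiv.Perm (Fin n) => fun k : Fin n => blockIdx nu ((w⁻¹ k : Fin n) : ℕ))
      {w | ∀ w' ∈ dCoset n lam nu w, coxLen w ≤ coxLen w'}
      {f : Fin n → ℕ | rowIncr n lam f ∧
        ∀ j < nu.length,
          (Finset.univ.filter (fun k : Fin n => f k = j)).card = nu.getD j 0} :=
  bijOn_min_reps_row_semistandard_general n lam nu hnu
end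

section
/- Let λ_1 > λ_2 > 0 be rationals and p_1, p_2 positive integers with s_1 = λ_1 p_1 and s_2 = λ_2 p_2 integers, gcd(s_1, p_1) = gcd(s_2, p_2) = 1, and s = s_1 + s_2. Suppose (m_1,...,m_l) is a composition of n = p_1 + p_2 and (s'_1,...,s'_l) an extended partition of s (nonnegative integers summing to s) with s'_1/m_1 > s'_2/m_2 > ... > s'_l/m_l, such that the vector ((s'_1/m_1)^{m_1},...,(s'_l/m_l)^{m_l}) is a positive real multiple of (λ_1^{p_1}, λ_2^{p_2}). Then l = 2, (m_1, m_2) = (p_1, p_2), and (s'_1, s'_2) = (s_1, s_2). -/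
/-- The multiset concatenation `((s'_1/m_1)^{m_1}, …, (s'_l/m_l)^{m_l})` over `ℚ`. -/
def ratioMultisetQ (mm ss : List ℕ) : Multiset ℚ :=
  (List.range mm.length).foldr
    (fun i acc => Multiset.replicate (mm.getD i 0) ((ss.getD i 0 : ℚ) / (mm.getD i 0 : ℚ)) + acc) 0

/-!
The vector is the multiset `∑ᵢ replicate mᵢ qᵢ` with `qᵢ = s'ᵢ/mᵢ` strictly decreasing, so its
distinct values are exactly the `qᵢ`. Equating it with `replicate p₁ (rλ₁) + replicate p₂ (rλ₂)`
forces `l = 2`, `q₁ = rλ₁`, `q₂ = rλ₂`, and comparing multiplicities gives `mᵢ = pᵢ`. Hence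
`s'ᵢ = r sᵢ`, and `s'₁ + s'₂ = s₁ + s₂ > 0` gives `r = 1`.
-/

open Finset

namespace Multiset

theorem replicate_add_replicate_inj {α : Type*} [DecidableEq α] {a b : α} (hab : a ≠ b)
    {m n p q : ℕ} (h : replicate m a + replicate n b = replicate p a + replicate q b) :
    m = p ∧ n = q := by
  constructor
  · simpa [count_replicate, hab.symm] using congrArg (count a) h
  · simpa [count_replicate, hab] using congrArg (count b) h

theorem toFinset_sum_replicate {ι α : Type*} [DecidableEq α] {s : Finset ι}
    {m : ι → ℕ} (hm : ∀ i ∈ s, 0 < m i) (q : ι → α) :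
    (∑ i ∈ s, replicate (m i) (q i)).toFinset = s.image q := by
  ext x
  simp only [Multiset.mem_toFinset, Multiset.mem_sum, mem_replicate, Finset.mem_image]
  exact exists_congr fun i =>
    ⟨fun ⟨hi, _, hx⟩ => ⟨hi, hx.symm⟩, fun ⟨hi, hx⟩ => ⟨hi, (hm i hi).ne', hx.symm⟩⟩

end Multiset

open Multiset

theorem eq_two_blocks_of_sum_range_replicate {α : Type*} [LinearOrder α] {l : ℕ} {m : ℕ → ℕ}
    {q : ℕ → α} (hq : StrictAntiOn q (Set.Iio l)) (hm : ∀ i < l, 0 < m i)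
    {a b : α} (hab : b < a) {p₁ p₂ : ℕ} (hp₁ : 0 < p₁) (hp₂ : 0 < p₂)
    (h : ∑ i ∈ Finset.range l, replicate (m i) (q i) = replicate p₁ a + replicate p₂ b) :
    l = 2 ∧ q 0 = a ∧ q 1 = b ∧ m 0 = p₁ ∧ m 1 = p₂ := by
  have himage : (Finset.range l).image q = {a, b} := by
    rw [← toFinset_sum_replicate (fun i hi => hm i (Finset.mem_range.1 hi)), h]
    ext x
    simp [hp₁.ne', hp₂.ne']
  have hl : l = 2 := by
    have := card_image_of_injOn (s := Finset.range l) (hq.injOn.mono (by simp))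
    rwa [himage, card_pair hab.ne', Finset.card_range, eq_comm] at this
  subst hl
  have hvalue : ∀ i < 2, q i = a ∨ q i = b := fun i hi => by
    have := Finset.mem_image_of_mem q (Finset.mem_range.2 hi)
    rwa [himage, mem_insert, Finset.mem_singleton] at this
  have hq₁₀ : q 1 < q 0 := hq (by simp) (by simp) zero_lt_one
  obtain ⟨hq₀, hq₁⟩ : q 0 = a ∧ q 1 = b := by
    rcases hvalue 0 (by norm_num) with h₀ | h₀ <;> rcases hvalue 1 (by norm_num) with h₁ | h₁ <;>
      rw [h₀, h₁] at hq₁₀ <;> first | exact ⟨h₀, h₁⟩ | order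
  rw [sum_range_succ, sum_range_one, hq₀, hq₁] at h
  exact ⟨rfl, hq₀, hq₁, replicate_add_replicate_inj hab.ne' h⟩

theorem ratioMultisetQ_eq_sum (mm ss : List ℕ) :
    ratioMultisetQ mm ss = ∑ i ∈ Finset.range mm.length,
      replicate (mm.getD i 0) ((ss.getD i 0 : ℚ) / (mm.getD i 0 : ℚ)) := by
  rw [ratioMultisetQ, sum_eq_multiset_sum, range_val, Multiset.range, map_coe, sum_coe, List.sum,
    List.foldr_map]

theorem eq_one_of_mul_add_mul_eq {R : Type*} [Ring R] [IsDomain R] {r x y : R} (hxy : x + y ≠ 0)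
    (h : r * x + r * y = x + y) : r = 1 := by
  rw [← mul_add] at h
  exact mul_right_cancel₀ hxy (by rw [h, one_mul])

theorem newton_vector_uniqueness_general
    (s p1 p2 s1 s2 : ℕ) (lam1 lam2 : ℚ)
    (hl : lam2 < lam1)
    (hp1 : 0 < p1) (hp2 : 0 < p2)
    (hs1 : (s1 : ℚ) = lam1 * p1) (hs2 : (s2 : ℚ) = lam2 * p2)
    (hs : s = s1 + s2)
    (mm ss : List ℕ) (hlen : ss.length = mm.length)
    (hposm : ∀ x ∈ mm, 0 < x) (hsums : ss.sum = s)
    (hdec : ∀ i j : ℕ, i < j → j < mm.length →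
      (ss.getD j 0 : ℚ) / (mm.getD j 0 : ℚ) < (ss.getD i 0 : ℚ) / (mm.getD i 0 : ℚ))
    (hprop : ∃ r : ℚ, 0 < r ∧
      ratioMultisetQ mm ss =
        Multiset.replicate p1 (r * lam1) + Multiset.replicate p2 (r * lam2)) :
    mm = [p1, p2] ∧ ss = [s1, s2] := by
  obtain ⟨r, hr, hM⟩ := hprop
  rw [ratioMultisetQ_eq_sum] at hM
  obtain ⟨hl2, hq₀, hq₁, hm₀, hm₁⟩ := eq_two_blocks_of_sum_range_replicate
    (fun i _ j hj hij => hdec i j hij hj)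
    (fun i hi => by rw [List.getD_eq_getElem _ _ hi]; exact hposm _ (List.getElem_mem hi))
    (mul_lt_mul_of_pos_left hl hr) hp1 hp2 hM
  obtain ⟨m₁, m₂, rfl⟩ := List.length_eq_two.1 hl2
  obtain ⟨t₁, t₂, rfl⟩ := List.length_eq_two.1 (hlen.trans hl2)
  simp only [List.getD_cons_zero, List.getD_cons_succ] at hq₀ hq₁ hm₀ hm₁
  subst hm₀ hm₁
  have ht₁ : (t₁ : ℚ) = r * s1 := by
    rw [hs1, ← mul_assoc, ← hq₀, div_mul_cancel₀ _ (by positivity)]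
  have ht₂ : (t₂ : ℚ) = r * s2 := by
    rw [hs2, ← mul_assoc, ← hq₁, div_mul_cancel₀ _ (by positivity)]
  have hlam2 : 0 ≤ lam2 := nonneg_of_mul_nonneg_left (hs2 ▸ s2.cast_nonneg) (by positivity)
  have hs1_pos : (0 : ℚ) < s1 := by rw [hs1]; exact mul_pos (hlam2.trans_lt hl) (by positivity)
  have hr1 : r = 1 := by
    refine eq_one_of_mul_add_mul_eq (x := (s1 : ℚ)) (y := s2)
      (add_pos_of_pos_of_nonneg hs1_pos s2.cast_nonneg).ne' ?_
    rw [← ht₁, ← ht₂]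
    exact_mod_cast (hsums.trans hs : t₁ + t₂ = s1 + s2)
  subst hr1
  rw [one_mul] at ht₁ ht₂
  exact ⟨rfl, by rw [Nat.cast_injective ht₁, Nat.cast_injective ht₂]⟩

/-- Uniqueness statement underlying Proposition 3.3: with `λ_1 > λ_2 > 0` rationals,
`s_1 = λ_1 p_1`, `s_2 = λ_2 p_2` integers coprime to `p_1`, `p_2` respectively, if
`(m_1,…,m_l)` is a composition of `n = p_1 + p_2` and `(s'_1,…,s'_l)` nonnegative
integers summing to `s = s_1 + s_2` with strictly decreasing ratios whose concatenated
vector is a positive multiple of `(λ_1^{p_1}, λ_2^{p_2})`, then `l = 2`,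
`(m_1, m_2) = (p_1, p_2)` and `(s'_1, s'_2) = (s_1, s_2)`. -/
theorem newton_vector_uniqueness
    (n s p1 p2 s1 s2 : ℕ) (lam1 lam2 : ℚ)
    (hl : lam2 < lam1) (hl2 : 0 < lam2)
    (hp1 : 0 < p1) (hp2 : 0 < p2) (hpn : p1 + p2 = n)
    (hs1 : (s1 : ℚ) = lam1 * p1) (hs2 : (s2 : ℚ) = lam2 * p2)
    (hg1 : Nat.gcd s1 p1 = 1) (hg2 : Nat.gcd s2 p2 = 1)
    (hs : s = s1 + s2)
    (mm ss : List ℕ) (hlen : ss.length = mm.length)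
    (hposm : ∀ x ∈ mm, 0 < x) (hsumm : mm.sum = n) (hsums : ss.sum = s)
    (hdec : ∀ i j : ℕ, i < j → j < mm.length →
      (ss.getD j 0 : ℚ) / (mm.getD j 0 : ℚ) < (ss.getD i 0 : ℚ) / (mm.getD i 0 : ℚ))
    (hprop : ∃ r : ℚ, 0 < r ∧
      ratioMultisetQ mm ss =
        Multiset.replicate p1 (r * lam1) + Multiset.replicate p2 (r * lam2)) :
    mm = [p1, p2] ∧ ss = [s1, s2] :=
  newton_vector_uniqueness_general s p1 p2 s1 s2 lam1 lam2 hl hp1 hp2 hs1 hs2 hs mm ss hlen hposm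
    hsums hdec hprop
end
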